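/- arXiv:2003.10721 — 2 statements merged into one kernel-verified Lean document; each statement's English description precedes it below -/
import Mathlib

section
/- Let B = [[5,2],[3,1]] and B₁ = [[1,1],[1,0]], and define D_n = tr(B₁ B^{n+1})² − 4(−1)^n. Then D_n mod 5 equals (−1)^k if n = 5k, 2(−1)^k if n = 5k+2, −2(−1)^k if n = 5k+3, and 0 if n ≡ 1 or 4 mod 5; furthermore D_n is odd if n is odd and even if n is even. -/
/-!
Modulo `m`, `D n` is periodic in `n` with period any even `p` such that `B ^ p ≡ 1 (mod m)`.
Modulo `5` the matrix `B` has order `20`, so both `D (5k + j)` and `(-1)^k` are `4`-periodic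
in `k`; modulo `2` we have `B² ≡ 1`. Each claim is therefore a finite computation over one period.
-/

open Matrix

/-- `D n = tr(B₁ B^(n+1))² − 4(−1)^n` for `B = [[5,2],[3,1]]`, `B₁ = [[1,1],[1,0]]`. -/
def Dseq (n : ℕ) : ℤ :=
  (Matrix.trace (!![(1 : ℤ), 1; 1, 0] * (!![(5 : ℤ), 2; 3, 1]) ^ (n + 1))) ^ 2
    - 4 * (-1) ^ n

open Function

theorem Dseq_cast {R : Type*} [CommRing R] (n : ℕ) :
    (Dseq n : R) = trace (!![(1 : R), 1; 1, 0] * !![(5 : R), 2; 3, 1] ^ (n + 1)) ^ 2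
      - 4 * (-1) ^ n := by
  have hmap : (Int.castRingHom R).mapMatrix (!![(1 : ℤ), 1; 1, 0] * !![(5 : ℤ), 2; 3, 1] ^ (n + 1))
      = !![(1 : R), 1; 1, 0] * !![(5 : R), 2; 3, 1] ^ (n + 1) := by
    rw [map_mul, map_pow]
    congr 2 <;> ext i j <;> fin_cases i <;> fin_cases j <;> simp
  rw [Dseq, ← hmap, RingHom.mapMatrix_apply, ← AddMonoidHom.map_trace]
  push_cast
  rfl

theorem periodic_Dseq_cast {R : Type*} [CommRing R] {p : ℕ}
    (hB : !![(5 : R), 2; 3, 1] ^ p = 1) (hp : Even p) :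
    Periodic (fun n ↦ (Dseq n : R)) p := fun n ↦ by
  simp only [Dseq_cast, add_right_comm n p 1, pow_add _ (n + 1), hB, mul_one, pow_add (-1 : R),
    hp.neg_one_pow]

set_option maxRecDepth 2000 in
theorem periodic_Dseq_zmod_five : Periodic (fun n ↦ (Dseq n : ZMod 5)) 20 :=
  periodic_Dseq_cast (by decide) (by decide)

theorem periodic_Dseq_zmod_two : Periodic (fun n ↦ (Dseq n : ZMod 2)) 2 :=
  periodic_Dseq_cast (by decide) even_two

theorem Dseq_five_mul_add_cast (k : ℕ) (j : Fin 5) :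
    (Dseq (5 * k + j) : ZMod 5) = ![1, 0, 2, -2, 0] j * (-1) ^ k := by
  have hD : Periodic (fun k ↦ (Dseq (5 * k + j) : ZMod 5)) 4 := fun k ↦ by
    simpa only [mul_add, add_right_comm] using periodic_Dseq_zmod_five (5 * k + j)
  have hsign : Periodic (fun k ↦ (![1, 0, 2, -2, 0] j * (-1) ^ k : ZMod 5)) 4 := fun k ↦ by
    simp only [pow_add, (by decide : ((-1) ^ 4 : ZMod 5) = 1), mul_one]
  have hperiod : ∀ r : Fin 4, ∀ j : Fin 5,
      (Dseq (5 * r + j) : ZMod 5) = ![1, 0, 2, -2, 0] j * (-1) ^ (r : ℕ) := by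
    simp only [Dseq_cast]; decide
  rw [← hD.map_mod_nat, ← hsign.map_mod_nat]
  exact hperiod ⟨k % 4, Nat.mod_lt _ (by norm_num)⟩ j

theorem Dseq_five_mul_add_modEq {k : ℕ} {j : Fin 5} {c : ℤ}
    (hc : (c : ZMod 5) = ![1, 0, 2, -2, 0] j * (-1) ^ k) :
    Dseq (5 * k + j) ≡ c [ZMOD 5] :=
  (ZMod.intCast_eq_intCast_iff _ _ 5).mp (by rw [Dseq_five_mul_add_cast, hc])

theorem Dseq_cast_zmod_two (n : ℕ) : (Dseq n : ZMod 2) = n := by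
  have hn : Periodic (fun n : ℕ ↦ (n : ZMod 2)) 2 := fun n ↦ by
    simp only [Nat.cast_add, Nat.cast_ofNat, CharTwo.two_eq_zero, add_zero]
  rw [← periodic_Dseq_zmod_two.map_mod_nat, ← hn.map_mod_nat]
  have hperiod : ∀ r : Fin 2, (Dseq r : ZMod 2) = (r : ℕ) := by
    simp only [Dseq_cast]; decide
  exact hperiod ⟨n % 2, Nat.mod_lt _ (by norm_num)⟩

theorem even_Dseq_iff (n : ℕ) : Even (Dseq n) ↔ Even n := by
  rw [← ZMod.intCast_eq_zero_iff_even, Dseq_cast_zmod_two, ← Int.even_coe_nat,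
    ← ZMod.intCast_eq_zero_iff_even, Int.cast_natCast]

theorem odd_Dseq_iff (n : ℕ) : Odd (Dseq n) ↔ Odd n := by
  rw [← Int.not_even_iff_odd, ← Nat.not_even_iff_odd, even_Dseq_iff]

theorem stmt_17 (n : ℕ) :
    (∀ k : ℕ, n = 5 * k → Dseq n ≡ (-1) ^ k [ZMOD 5]) ∧
    (∀ k : ℕ, n = 5 * k + 2 → Dseq n ≡ 2 * (-1) ^ k [ZMOD 5]) ∧
    (∀ k : ℕ, n = 5 * k + 3 → Dseq n ≡ -2 * (-1) ^ k [ZMOD 5]) ∧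
    (n % 5 = 1 ∨ n % 5 = 4 → Dseq n ≡ 0 [ZMOD 5]) ∧
    (Odd n → Odd (Dseq n)) ∧ (Even n → Even (Dseq n)) := by
  refine ⟨?_, ?_, ?_, ?_, (odd_Dseq_iff n).mpr, (even_Dseq_iff n).mpr⟩
  · rintro k rfl
    exact Dseq_five_mul_add_modEq (j := 0) (by simp)
  · rintro k rfl
    exact Dseq_five_mul_add_modEq (j := 2) (by simp)
  · rintro k rfl
    exact Dseq_five_mul_add_modEq (j := 3) (by simp)
  · rintro (h | h) <;> rw [← Nat.div_add_mod n 5, h]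
    · exact Dseq_five_mul_add_modEq (j := 1) (by simp)
    · exact Dseq_five_mul_add_modEq (j := 4) (by simp)
end

section
/- Suppose a double sequence γ⁽ⁿ⁾(m) of reals satisfies γ⁽ⁿ⁾(m) = 2 + τ⁽ⁿ⁾(m)·γ⁽ⁿ⁾(m−1) for m ≥ 1 where 0 < τ⁽ⁿ⁾(m) < 9/50 for all n, m, and γ⁽ⁿ⁾(0) is bounded by 4. If τ⁽ⁿ⁾(m) → τ(m) uniformly in m as n → ∞ and γ⁽ⁿ⁾(0) converges, and τ(m) → τ as m → ∞ with 0 < τ < 1, then γ(m) := lim_n γ⁽ⁿ⁾(m) exists for each m (uniformly in m), γ(m) converges to γ = 2/(1−τ) as m → ∞, and γ⁽ⁿ⁾(n) → 2/(1−τ) as n → ∞. -/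
/-!
Two solutions of `x (m + 1) = c + t (m + 1) * x m` with coefficients bounded by `q < 1` satisfy
`|Δx (m + 1)| ≤ q |Δx m| + |Δt (m + 1)| |y m|`, so a discrete Grönwall estimate bounds `|Δx m|` by
`|Δx 0| + sup |Δt| · sup |y| / (1 - q)`, uniformly in `m`; this gives `γ⁽ⁿ⁾ → γ` uniformly.
Comparing `γ` on `[M, ∞)` with the constant solution `2 / (1 - τ)` of the recurrence with
coefficient `τ` gives `γ (m) → 2 / (1 - τ)`, and the diagonal limit follows from uniformity.
-/

open Filter Topology

theorem TendstoUniformly.tendsto_apply_of_tendsto {ι α β : Type*} [UniformSpace β]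
    {F : ι → α → β} {f : α → β} {p : Filter ι} {u : ι → α} {b : β}
    (hF : TendstoUniformly F f p) (hf : Tendsto (fun i => f (u i)) p (𝓝 b)) :
    Tendsto (fun i => F i (u i)) p (𝓝 b) :=
  hf.congr_uniformity <|
    (tendstoUniformly_iff_tendsto.1 hF).comp (tendsto_id.prodMk tendsto_top)

theorem le_pow_mul_add_div_of_le_mul_add {u : ℕ → ℝ} {q e : ℝ} (hq : 0 ≤ q) (hq1 : q < 1)
    (he : 0 ≤ e) (h : ∀ m, u (m + 1) ≤ q * u m + e) (m : ℕ) :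
    u m ≤ q ^ m * u 0 + e / (1 - q) := by
  have h1q : 0 < 1 - q := sub_pos.2 hq1
  induction m with
  | zero => simpa using div_nonneg he h1q.le
  | succ m ih =>
    calc u (m + 1) ≤ q * (q ^ m * u 0 + e / (1 - q)) + e :=
          (h m).trans (by gcongr)
      _ = q ^ (m + 1) * u 0 + e / (1 - q) := by field_simp; ring

theorem tendsto_zero_of_le_mul_add {u e : ℕ → ℝ} {q : ℝ} (hq : 0 ≤ q) (hq1 : q < 1)
    (hu : ∀ m, 0 ≤ u m) (h : ∀ m, u (m + 1) ≤ q * u m + e m) (he : Tendsto e atTop (𝓝 0)) :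
    Tendsto u atTop (𝓝 0) := by
  have h1q : 0 < 1 - q := sub_pos.2 hq1
  refine tendsto_order.2 ⟨fun a ha => Eventually.of_forall fun m => ha.trans_le (hu m),
    fun ε hε => ?_⟩
  obtain ⟨M, hM⟩ := eventually_atTop.1 <|
    he.eventually (ge_mem_nhds (show (0 : ℝ) < ε / 2 * (1 - q) by positivity))
  have hshift (k : ℕ) : u (M + k) ≤ q ^ k * u M + ε / 2 := by
    have := le_pow_mul_add_div_of_le_mul_add (u := fun k => u (M + k)) (e := ε / 2 * (1 - q))
      hq hq1 (by positivity) (fun k => (h (M + k)).trans (by gcongr; exact hM _ (by omega))) k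
    rwa [add_zero, mul_div_cancel_right₀ _ h1q.ne'] at this
  have hpow : Tendsto (fun k => q ^ k * u M) atTop (𝓝 0) := by
    simpa using (tendsto_pow_atTop_nhds_zero_of_lt_one hq hq1).mul_const (u M)
  obtain ⟨K, hK⟩ := eventually_atTop.1 (hpow.eventually (gt_mem_nhds (half_pos hε)))
  refine eventually_atTop.2 ⟨M + K, fun m hm => ?_⟩
  obtain ⟨k, rfl⟩ := Nat.exists_eq_add_of_le (le_of_add_le_left hm)
  linarith [hshift k, hK k (by omega)]

def IsAffineRec (c : ℝ) (t x : ℕ → ℝ) : Prop :=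
  ∀ m, x (m + 1) = c + t (m + 1) * x m

namespace IsAffineRec

variable {c q : ℝ} {t s x y : ℕ → ℝ}

theorem exists_of_initial (c x₀ : ℝ) (t : ℕ → ℝ) : ∃ x, x 0 = x₀ ∧ IsAffineRec c t x :=
  ⟨fun m => Nat.rec x₀ (fun k xk => c + t (k + 1) * xk) m, rfl, fun _ => rfl⟩

theorem const {τ : ℝ} (hτ : τ ≠ 1) : IsAffineRec c (fun _ => τ) (fun _ => c / (1 - τ)) := by
  intro m
  field_simp [sub_ne_zero.2 hτ.symm]
  ring

theorem shift (hx : IsAffineRec c t x) (M : ℕ) :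
    IsAffineRec c (fun k => t (M + k)) (fun k => x (M + k)) :=
  fun k => hx (M + k)

theorem abs_le (hx : IsAffineRec c t x) (ht : ∀ m, |t m| ≤ q) (hq1 : q < 1) (m : ℕ) :
    |x m| ≤ |x 0| + |c| / (1 - q) := by
  have hq : 0 ≤ q := (abs_nonneg _).trans (ht 0)
  have hstep (m : ℕ) : |x (m + 1)| ≤ q * |x m| + |c| := by
    rw [hx m]
    calc |c + t (m + 1) * x m| ≤ |c| + |t (m + 1)| * |x m| := by
          rw [← abs_mul]; exact abs_add_le _ _
      _ ≤ q * |x m| + |c| := by nlinarith [ht (m + 1), abs_nonneg (x m)]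
  have := le_pow_mul_add_div_of_le_mul_add (u := fun m => |x m|) hq hq1 (abs_nonneg c) hstep m
  nlinarith [pow_le_one₀ hq hq1.le (n := m), abs_nonneg (x 0)]

theorem abs_sub_succ_le (hx : IsAffineRec c t x) (hy : IsAffineRec c s y) (m : ℕ) :
    |x (m + 1) - y (m + 1)| ≤ |t (m + 1)| * |x m - y m| + |t (m + 1) - s (m + 1)| * |y m| := by
  rw [hx m, hy m, ← abs_mul, ← abs_mul]
  calc |c + t (m + 1) * x m - (c + s (m + 1) * y m)|
      = |t (m + 1) * (x m - y m) + (t (m + 1) - s (m + 1)) * y m| := by ring_nf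
    _ ≤ _ := abs_add_le _ _

theorem abs_sub_le (hx : IsAffineRec c t x) (hy : IsAffineRec c s y) (ht : ∀ m, |t m| ≤ q)
    (hq1 : q < 1) {δ B : ℝ} (hts : ∀ m, |t m - s m| ≤ δ) (hyB : ∀ m, |y m| ≤ B) (m : ℕ) :
    |x m - y m| ≤ |x 0 - y 0| + δ * B / (1 - q) := by
  have hq : 0 ≤ q := (abs_nonneg _).trans (ht 0)
  have hδB : 0 ≤ δ * B := mul_nonneg ((abs_nonneg _).trans (hts 0)) ((abs_nonneg _).trans (hyB 0))
  have hstep (m : ℕ) : |x (m + 1) - y (m + 1)| ≤ q * |x m - y m| + δ * B :=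
    (abs_sub_succ_le hx hy m).trans <| add_le_add
      (mul_le_mul_of_nonneg_right (ht _) (abs_nonneg _))
      (mul_le_mul (hts _) (hyB _) (abs_nonneg _) ((abs_nonneg _).trans (hts 0)))
  have := le_pow_mul_add_div_of_le_mul_add (u := fun m => |x m - y m|) hq hq1 hδB hstep m
  nlinarith [pow_le_one₀ hq hq1.le (n := m), abs_nonneg (x 0 - y 0)]

theorem tendsto (hx : IsAffineRec c t x) (ht : ∀ m, |t m| ≤ q) (hq1 : q < 1) {τ : ℝ}
    (hτ : Tendsto t atTop (𝓝 τ)) : Tendsto x atTop (𝓝 (c / (1 - τ))) := by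
  have hq : 0 ≤ q := (abs_nonneg _).trans (ht 0)
  have hτ1 : τ ≠ 1 := by
    have := le_of_tendsto' hτ.abs ht
    rintro rfl
    norm_num at this
    linarith
  rw [tendsto_iff_norm_sub_tendsto_zero]
  refine tendsto_zero_of_le_mul_add hq hq1 (fun m => norm_nonneg _)
    (e := fun m => |t (m + 1) - τ| * |c / (1 - τ)|) (fun m => ?_) ?_
  · simpa only [Real.norm_eq_abs] using (abs_sub_succ_le hx (const hτ1) m).trans
      (add_le_add_left (mul_le_mul_of_nonneg_right (ht _) (abs_nonneg _)) _)
  · simpa using (((hτ.comp (tendsto_add_atTop_nat 1)).sub_const τ).abs.mul_const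
      |c / (1 - τ)|)

theorem tendstoUniformly {t x : ℕ → ℕ → ℝ} (hx : ∀ n, IsAffineRec c (t n) (x n))
    (hy : IsAffineRec c s y) (ht : ∀ n m, |t n m| ≤ q) (hs : ∀ m, |s m| ≤ q) (hq1 : q < 1)
    (hts : TendstoUniformly t s atTop) (h0 : Tendsto (fun n => x n 0) atTop (𝓝 (y 0))) :
    TendstoUniformly x y atTop := by
  set B := |y 0| + |c| / (1 - q)
  set K := B / (1 - q)
  have hK : 0 ≤ K := by
    have := sub_pos.2 hq1
    positivity
  rw [Metric.tendstoUniformly_iff] at hts ⊢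
  intro ε hε
  set δ := ε / 2 / (K + 1)
  have hδ : 0 < δ := by positivity
  have hδK : δ * B / (1 - q) < ε / 2 := by
    rw [mul_div_assoc]
    calc δ * K < δ * (K + 1) := by gcongr; linarith
      _ = ε / 2 := div_mul_cancel₀ _ (by positivity)
  filter_upwards [hts δ hδ, Metric.tendsto_nhds.1 h0 (ε / 2) (half_pos hε)] with n hn hn0 m
  have := abs_sub_le (hx n) hy (ht n) hq1 (δ := δ)
    (fun m => by rw [abs_sub_comm, ← Real.dist_eq]; exact (hn m).le) (hy.abs_le hs hq1) m
  rw [Real.dist_eq] at hn0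
  rw [Real.dist_eq, abs_sub_comm]
  linarith

end IsAffineRec

theorem stmt_19_general (γ τ : ℕ → ℕ → ℝ) (τlim : ℕ → ℝ) (τInf : ℝ)
    (hrec : ∀ n m, γ n (m + 1) = 2 + τ n (m + 1) * γ n m)
    (hτpos : ∀ n m, 0 < τ n m) (hτlt : ∀ n m, τ n m < 9 / 50)
    (hτu : ∀ ε > (0 : ℝ), ∃ N, ∀ n ≥ N, ∀ m, |τ n m - τlim m| < ε)
    (hγ0conv : ∃ L, Tendsto (fun n => γ n 0) atTop (nhds L))
    (hτInf : Tendsto τlim atTop (nhds τInf)) :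
    ∃ γlim : ℕ → ℝ,
      (∀ ε > (0 : ℝ), ∃ N, ∀ n ≥ N, ∀ m, |γ n m - γlim m| < ε) ∧
      Tendsto γlim atTop (nhds (2 / (1 - τInf))) ∧
      Tendsto (fun n => γ n n) atTop (nhds (2 / (1 - τInf))) := by
  obtain ⟨L, hL⟩ := hγ0conv
  have hτq (n m : ℕ) : |τ n m| ≤ 9 / 50 :=
    abs_le.2 ⟨by linarith [hτpos n m], (hτlt n m).le⟩
  have hτunif : TendstoUniformly τ τlim atTop :=
    Metric.tendstoUniformly_iff.2 fun ε hε => eventually_atTop.2 <|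
      (hτu ε hε).imp fun _ hN n hn m => by rw [dist_comm, Real.dist_eq]; exact hN n hn m
  have hτlimq (m : ℕ) : |τlim m| ≤ 9 / 50 :=
    le_of_tendsto' (hτunif.tendsto_at m).abs fun n => hτq n m
  obtain ⟨γlim, hγlim0, hγlim⟩ := IsAffineRec.exists_of_initial 2 L τlim
  have hγunif : TendstoUniformly γ γlim atTop :=
    IsAffineRec.tendstoUniformly hrec hγlim hτq hτlimq (by norm_num) hτunif (hγlim0 ▸ hL)
  have hγlimτ := hγlim.tendsto hτlimq (by norm_num) hτInf
  refine ⟨γlim, fun ε hε => ?_, hγlimτ, hγunif.tendsto_apply_of_tendsto hγlimτ⟩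
  obtain ⟨N, hN⟩ := eventually_atTop.1 (Metric.tendstoUniformly_iff.1 hγunif ε hε)
  exact ⟨N, fun n hn m => by simpa only [dist_comm, Real.dist_eq] using hN n hn m⟩

theorem stmt_19 (γ τ : ℕ → ℕ → ℝ) (τlim : ℕ → ℝ) (τInf : ℝ)
    (hrec : ∀ n m, γ n (m + 1) = 2 + τ n (m + 1) * γ n m)
    (hτpos : ∀ n m, 0 < τ n m) (hτlt : ∀ n m, τ n m < 9 / 50)
    (hγ0 : ∀ n, |γ n 0| ≤ 4)
    (hτu : ∀ ε > (0 : ℝ), ∃ N, ∀ n ≥ N, ∀ m, |τ n m - τlim m| < ε)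
    (hγ0conv : ∃ L, Tendsto (fun n => γ n 0) atTop (nhds L))
    (hτInf : Tendsto τlim atTop (nhds τInf))
    (hτInfpos : 0 < τInf) (hτInflt : τInf < 1) :
    ∃ γlim : ℕ → ℝ,
      (∀ ε > (0 : ℝ), ∃ N, ∀ n ≥ N, ∀ m, |γ n m - γlim m| < ε) ∧
      Tendsto γlim atTop (nhds (2 / (1 - τInf))) ∧
      Tendsto (fun n => γ n n) atTop (nhds (2 / (1 - τInf))) :=
  stmt_19_general γ τ τlim τInf hrec hτpos hτlt hτu hγ0conv hτInf
end
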